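/- Let the conditional posterior of α_0 given K (number of clusters) be proportional to p(α_0) α_0^K Γ(α_0)/Γ(α_0 + n), with prior p(α_0) = Gamma(c, d). Introducing η with η | α_0 ~ Beta(α_0 + 1, n), the conditional distribution of α_0 given (η, K) is the two-component Gamma mixture g · Gamma(c + K, d − log η) + (1 − g) · Gamma(c + K − 1, d − log η), where g/(1 − g) = (c + K − 1)/[n(d − log η)]. -/
import Mathlib


open Real

-- Gamma(a, b) density: `∝ x^{a−1} e^{−bx}` on `(0,∞)`, normalized.
noncomputable def gammaDensity (a b x : ℝ) : ℝ :=
  if 0 < x then b ^ a / Real.Gamma a * x ^ (a - 1) * Real.exp (-b * x) else 0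

-- Beta function `B(x,y) = Γ(x)Γ(y)/Γ(x+y)`.
noncomputable def betaFn (x y : ℝ) : ℝ :=
  Real.Gamma x * Real.Gamma y / Real.Gamma (x + y)

/-- Escobar & West, 1995: with conditional posterior of `α₀` given
`K` proportional to `p(α₀) α₀^K Γ(α₀)/Γ(α₀+n)`, prior `p(α₀) = Gamma(c,d)`, and
augmentation `η | α₀ ~ Beta(α₀+1, n)`, the conditional distribution of `α₀`
given `(η, K)` is the mixture
`g·Gamma(c+K, d−log η) + (1−g)·Gamma(c+K−1, d−log η)` with
`g/(1−g) = (c+K−1)/[n(d−log η)]`. -/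
theorem stmt15 (c d : ℝ) (hc : 0 < c) (hd : 0 < d) (n : ℕ) (hn : 1 ≤ n)
    (K : ℕ) (hK1 : 1 ≤ K) (hKn : K ≤ n) (η : ℝ) (hη : η ∈ Set.Ioo (0 : ℝ) 1)
    (g : ℝ) (hg : g ∈ Set.Ioo (0 : ℝ) 1)
    (hodds : g / (1 - g) = (c + K - 1) / (n * (d - Real.log η))) :
    ∃ cst > (0 : ℝ), ∀ a : ℝ, 0 < a →
      gammaDensity c d a * a ^ K * (Real.Gamma a / Real.Gamma (a + n)) *
          (η ^ a * (1 - η) ^ (n - 1) / betaFn (a + 1) n) =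
        cst * (g * gammaDensity (c + K) (d - Real.log η) a +
          (1 - g) * gammaDensity (c + K - 1) (d - Real.log η) a) := by
  obtain ⟨hη0, hη1⟩ := hη
  obtain ⟨hg0, hg1⟩ := hg
  have hlog : Real.log η < 0 := Real.log_neg hη0 hη1
  have hb : 0 < d - Real.log η := by linarith
  have hK1' : (1:ℝ) ≤ (K:ℝ) := by exact_mod_cast hK1
  have hn' : (1:ℝ) ≤ (n:ℝ) := by exact_mod_cast hn
  have hcK : 0 < c + (K:ℝ) - 1 := by linarith
  have hΓc : 0 < Real.Gamma c := Real.Gamma_pos_of_pos hc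
  have hΓn : 0 < Real.Gamma n := Real.Gamma_pos_of_pos (by linarith)
  have hΓcK1 : 0 < Real.Gamma (c + (K:ℝ) - 1) := Real.Gamma_pos_of_pos hcK
  have hΓrec : Real.Gamma (c + (K:ℝ)) = (c + (K:ℝ) - 1) * Real.Gamma (c + (K:ℝ) - 1) := by
    have h := Real.Gamma_add_one (ne_of_gt hcK)
    rw [sub_add_cancel] at h
    exact h
  have h1g : 0 < 1 - g := by linarith
  have hodds' : g * ((n:ℝ) * (d - Real.log η)) = (c + (K:ℝ) - 1) * (1 - g) := by
    rw [div_eq_div_iff (by linarith) (by positivity)] at hodds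
    linarith [hodds]
  have hgsub : 1 - g = g * ((n:ℝ) * (d - Real.log η)) / (c + (K:ℝ) - 1) := by
    rw [eq_div_iff (ne_of_gt hcK)]
    linarith [hodds']
  have h1η : 0 < 1 - η := by linarith
  have hΓcK : 0 < Real.Gamma (c + (K:ℝ)) := Real.Gamma_pos_of_pos (by linarith)
  have hdc : 0 < d ^ c := Real.rpow_pos_of_pos hd c
  have hbcK : 0 < (d - Real.log η) ^ (c + (K:ℝ)) := Real.rpow_pos_of_pos hb _
  refine ⟨d ^ c * (1 - η) ^ (n - 1) * Real.Gamma (c + (K:ℝ)) /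
      (Real.Gamma c * Real.Gamma n * g * (d - Real.log η) ^ (c + (K:ℝ))),
    div_pos (mul_pos (mul_pos hdc (pow_pos h1η _)) hΓcK)
      (mul_pos (mul_pos (mul_pos hΓc hΓn) hg0) hbcK), ?_⟩
  intro a ha
  have hΓa : 0 < Real.Gamma a := Real.Gamma_pos_of_pos ha
  have hΓan : 0 < Real.Gamma (a + n) := Real.Gamma_pos_of_pos (by linarith)
  have hΓa1 : Real.Gamma (a + 1) = a * Real.Gamma a := Real.Gamma_add_one ha.ne'
  have hΓan1 : Real.Gamma (a + 1 + n) = (a + n) * Real.Gamma (a + n) := by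
    rw [show a + 1 + (n:ℝ) = (a + (n:ℝ)) + 1 by ring, Real.Gamma_add_one (by linarith)]
  have hηa : η ^ a = Real.exp (Real.log η * a) := Real.rpow_def_of_pos hη0 a
  have hexp : Real.exp (-(d - Real.log η) * a) = Real.exp (-d * a) * Real.exp (Real.log η * a) := by
    rw [← Real.exp_add]; ring_nf
  have hpowK : a ^ K = a ^ (K:ℝ) := (Real.rpow_natCast a K).symm
  have hmerge : a ^ (c - 1) * a ^ (K:ℝ) = a ^ (c + (K:ℝ) - 1) := by
    rw [← Real.rpow_add ha]; ring_nf
  have h2 : a ^ (c + (K:ℝ) - 1 - 1) = a ^ (c - 1) * a ^ (K:ℝ) / a := by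
    rw [eq_div_iff ha.ne', hmerge, ← Real.rpow_add_one ha.ne']; norm_num
  have hbpow : (d - Real.log η) ^ (c + (K:ℝ)) =
      (d - Real.log η) ^ (c + (K:ℝ) - 1) * (d - Real.log η) := by
    rw [← Real.rpow_add_one hb.ne']; norm_num
  have hS : 0 < (d - Real.log η) ^ (c + (K:ℝ) - 1) := Real.rpow_pos_of_pos hb _
  simp only [gammaDensity, betaFn, if_pos ha]
  rw [hΓa1, hΓan1, hΓrec, hgsub, hηa, hexp, hbpow, hpowK, h2, hmerge.symm]
  have he1 := (Real.exp_pos (-d * a)).ne'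
  have he2 := (Real.exp_pos (Real.log η * a)).ne'
  field_simp
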